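/- For d = 2j+1 and b = a, if jr - α - js + β = dk for some integer k, then ⟨jα;ra | jβ;sa⟩ = (-1)^{(d-1)k} q^{j(β-α)}, a complex number of modulus 1. -/

import Mathlib

open Complex Finset

/-- The phase function `ρ(j,m,x,y,z) = (j+m)(j-m+1)x/2 - jmy + (j+m)z`. -/
noncomputable def rho (j m x y z : ℝ) : ℝ :=
  (j + m) * (j - m + 1) * x / 2 - j * m * y + (j + m) * z

/-- The vector `|jα;ra⟩` of components `(1/√d) q^{ρ(j, k-j, a, r, α)}`, `k = 0,…,d-1`,
where `j = (d-1)/2` and `q^x = exp(2πix/d)`. -/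
noncomputable def mubVec (d : ℕ) (a r α : ℝ) : Fin d → ℂ := fun k =>
  ((1 / Real.sqrt d : ℝ) : ℂ) *
    Complex.exp (2 * (Real.pi : ℂ) * Complex.I *
      ((rho (((d : ℝ) - 1) / 2) ((k : ℝ) - ((d : ℝ) - 1) / 2) a r α : ℝ) / (d : ℂ)))

/-- The overlap `⟨jα;ra | jβ;sb⟩` (standard Hermitian inner product on `ℂ^d`). -/
noncomputable def overlap (d : ℕ) (a r : ℝ) (α : ℝ) (b s : ℝ) (β : ℝ) : ℂ :=
  ∑ k : Fin d, (starRingEnd ℂ) (mubVec d a r α k) * mubVec d b s β k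

/-! For `b = a` the quadratic parts of `ρ` cancel, so the `m`-th summand of the overlap is
`(1/d) q^{m (jr - α - js + β) + j (β - α)} = (1/d) q^{m d k} q^{j (β - α)}`. As `m + j` is an
integer, `q^{m d k} = e^{2πi m k} = (-1)^{2jk}` does not depend on `m`, so the `d` equal summands
add up to `(-1)^{(d-1)k} q^{j(β-α)}`, which has modulus one. -/

noncomputable def qPow (d : ℕ) (x : ℝ) : ℂ :=
  Complex.exp (2 * (Real.pi : ℂ) * Complex.I * ((x : ℂ) / (d : ℂ)))

theorem qPow_add (d : ℕ) (x y : ℝ) : qPow d (x + y) = qPow d x * qPow d y := by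
  rw [qPow, qPow, qPow, ← Complex.exp_add]
  push_cast
  ring_nf

theorem conj_qPow (d : ℕ) (x : ℝ) : (starRingEnd ℂ) (qPow d x) = qPow d (-x) := by
  rw [qPow, qPow, ← Complex.exp_conj]
  simp only [map_mul, map_div₀, map_ofNat, Complex.conj_ofReal, Complex.conj_I,
    Complex.conj_natCast, Complex.ofReal_neg]
  ring_nf

theorem norm_qPow (d : ℕ) (x : ℝ) : ‖qPow d x‖ = 1 := by
  rw [qPow, show 2 * (Real.pi : ℂ) * I * ((x : ℂ) / (d : ℂ))
      = ((2 * Real.pi * (x / d) : ℝ) : ℂ) * I by push_cast; ring]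
  exact Complex.norm_exp_ofReal_mul_I _

theorem exp_two_pi_mul_I_mul_int_add_half (n m : ℤ) :
    Complex.exp (2 * Real.pi * I * (n + m / 2)) = (-1) ^ m := by
  rw [show 2 * Real.pi * I * (n + m / 2) = n * (2 * Real.pi * I) + m * (Real.pi * I) by ring,
    Complex.exp_add, Complex.exp_int_mul_two_pi_mul_I, Complex.exp_int_mul,
    Complex.exp_pi_mul_I, one_mul]

-- `(idx - j) k` differs from the half-integer `(d - 1) k / 2` by an integer.
theorem qPow_half_integer_mul_dim (d : ℕ) (hd : d ≠ 0) (idx : ℕ) (k : ℤ) :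
    qPow d (((idx : ℝ) - ((d : ℝ) - 1) / 2) * d * k) = (-1) ^ (((d : ℤ) - 1) * k) := by
  have hdC : (d : ℂ) ≠ 0 := Nat.cast_ne_zero.mpr hd
  rw [qPow, ← exp_two_pi_mul_I_mul_int_add_half (idx * k - ((d : ℤ) - 1) * k)]
  congr 1
  push_cast
  field_simp
  ring

theorem mubVec_apply (d : ℕ) (a r α : ℝ) (idx : Fin d) :
    mubVec d a r α idx = ((1 / Real.sqrt d : ℝ) : ℂ) *
      qPow d (rho (((d : ℝ) - 1) / 2) ((idx : ℝ) - ((d : ℝ) - 1) / 2) a r α) :=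
  rfl

theorem rho_sub_rho (j m x r s α β : ℝ) :
    rho j m x s β - rho j m x r α = m * (j * r - α - j * s + β) + j * (β - α) := by
  unfold rho
  ring

theorem conj_mubVec_mul_mubVec (d : ℕ) (a r s α β : ℝ) (idx : Fin d) :
    (starRingEnd ℂ) (mubVec d a r α idx) * mubVec d a s β idx
      = 1 / d * qPow d (rho (((d : ℝ) - 1) / 2) ((idx : ℝ) - ((d : ℝ) - 1) / 2) a s β
          - rho (((d : ℝ) - 1) / 2) ((idx : ℝ) - ((d : ℝ) - 1) / 2) a r α) := by
  have hsq : ((1 / Real.sqrt d : ℝ) : ℂ) * ((1 / Real.sqrt d : ℝ) : ℂ) = 1 / (d : ℂ) := by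
    rw [← Complex.ofReal_mul, div_mul_div_comm, one_mul, Real.mul_self_sqrt d.cast_nonneg]
    push_cast
    ring
  rw [mubVec_apply, mubVec_apply, map_mul, Complex.conj_ofReal, conj_qPow,
    mul_mul_mul_comm, hsq, ← qPow_add, neg_add_eq_sub]

theorem stmt_10_general (d : ℕ) (hd : 2 ≤ d) (a r s : ℝ) (α β : ℕ)
    (k : ℤ) (hθ : ((d : ℝ) - 1) / 2 * r - α - ((d : ℝ) - 1) / 2 * s + β = d * k) :
    overlap d a r α a s β =
      ((-1 : ℂ) ^ (((d : ℤ) - 1) * k)) *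
        Complex.exp (2 * (Real.pi : ℂ) * Complex.I *
          ((((d : ℝ) - 1) / 2 * ((β : ℝ) - α) : ℝ) / (d : ℂ))) ∧
    ‖overlap d a r α a s β‖ = 1 := by
  have hd0 : d ≠ 0 := by omega
  set C := (-1 : ℂ) ^ (((d : ℤ) - 1) * k) * qPow d (((d : ℝ) - 1) / 2 * ((β : ℝ) - α))
  have hterm : ∀ idx : Fin d,
      (starRingEnd ℂ) (mubVec d a r α idx) * mubVec d a s β idx = 1 / d * C := by
    intro idx
    rw [conj_mubVec_mul_mubVec, rho_sub_rho, hθ, ← mul_assoc, qPow_add,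
      qPow_half_integer_mul_dim d hd0]
  have hov : overlap d a r α a s β = C := by
    rw [overlap, Finset.sum_congr rfl fun idx _ => hterm idx, Finset.sum_const,
      Finset.card_univ, Fintype.card_fin, nsmul_eq_mul]
    field_simp
  refine ⟨hov, ?_⟩
  rw [hov, norm_mul, norm_zpow, norm_neg, norm_one, one_zpow, one_mul, norm_qPow]

/-- for `b = a`, if `jr - α - js + β = dk` for some integer `k`, then
`⟨jα;ra | jβ;sa⟩ = (-1)^{(d-1)k} q^{j(β-α)}`, a complex number of modulus 1. -/
theorem stmt_10 (d : ℕ) (hd : 2 ≤ d) (a r s : ℝ) (α β : ℕ) (hα : α < d) (hβ : β < d)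
    (k : ℤ) (hθ : ((d : ℝ) - 1) / 2 * r - α - ((d : ℝ) - 1) / 2 * s + β = d * k) :
    overlap d a r α a s β =
      ((-1 : ℂ) ^ (((d : ℤ) - 1) * k)) *
        Complex.exp (2 * (Real.pi : ℂ) * Complex.I *
          ((((d : ℝ) - 1) / 2 * ((β : ℝ) - α) : ℝ) / (d : ℂ))) ∧
    ‖overlap d a r α a s β‖ = 1 :=
  stmt_10_general d hd a r s α β k hθ
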